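/- arXiv:0911.3083 — 2 statements merged into one kernel-verified Lean document; each statement's English description precedes it below -/
import Mathlib

section
/- Let (X_n) be a stationary sequence that is L^1 near epoch dependent with approximation constants (a_l) satisfying \sum_l a_l^{\delta/(1+\delta)} < \infty and E|X_1|^{2+\delta} < \infty. Then \sum_{l=1}^\infty (E|X_0 - E[X_0|Z_{-l},...,Z_l]|^{(2+\delta)/(1+\delta)})^{(1+\delta)/(2+\delta)} < \infty. -/
/-!
Put `Y_l = X_1 - E[X_1 | F_l]` and `p = (2+δ)/(1+δ)`. Since `1/p = (1-θ)/1 + θ/(2+δ)` with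
`θ = 1/(1+δ)`, Lyapunov's interpolation inequality (a consequence of Hölder's inequality) gives
`‖Y_l‖_p ≤ ‖Y_l‖_1^{δ/(1+δ)} ‖Y_l‖_{2+δ}^{1/(1+δ)}`. Near epoch dependence bounds the first
factor by `a_l^{δ/(1+δ)}`, and conditional expectation is a contraction of `L^{2+δ}`, so the
second factor is at most `(2‖X_1‖_{2+δ})^{1/(1+δ)}` uniformly in `l`; comparison with
`∑ a_l^{δ/(1+δ)}` concludes.
-/

open MeasureTheory
open scoped ENNReal NNReal

namespace MeasureTheory

variable {α E : Type*} {m₀ : MeasurableSpace α} {μ : Measure α} [NormedAddCommGroup E] {f : α → E}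

theorem eLpNorm'_le_eLpNorm'_rpow_mul_eLpNorm'_rpow (hf : AEStronglyMeasurable f μ)
    {p p₀ p₁ θ : ℝ} (hp₀ : 0 < p₀) (hp₁ : 0 < p₁) (hθ₀ : 0 ≤ θ) (hθ₁ : θ ≤ 1)
    (hp : p⁻¹ = (1 - θ) / p₀ + θ / p₁) :
    eLpNorm' f p μ ≤ eLpNorm' f p₀ μ ^ (1 - θ) * eLpNorm' f p₁ μ ^ θ := by
  have hp_pos : 0 < p := by
    refine inv_pos.mp (hp ▸ ?_)
    rcases hθ₀.lt_or_eq with hθ | rfl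
    · exact add_pos_of_nonneg_of_pos (div_nonneg (by linarith) hp₀.le) (div_pos hθ hp₁)
    · simpa using hp₀
  set a := (1 - θ) * p / p₀
  set b := θ * p / p₁
  have hab : a + b = 1 :=
    calc a + b = p * ((1 - θ) / p₀ + θ / p₁) := by simp only [a, b]; ring
      _ = 1 := by rw [← hp, mul_inv_cancel₀ hp_pos.ne']
  have hsplit : ∀ x : ℝ≥0∞, x ^ p = (x ^ p₀) ^ a * (x ^ p₁) ^ b := by
    intro x
    rw [← ENNReal.rpow_mul, ← ENNReal.rpow_mul,
      ← ENNReal.rpow_add_of_nonneg _ _ (by positivity) (by positivity)]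
    congr 1
    simp only [a, b]
    field_simp
    ring
  have hholder : ∫⁻ x, ‖f x‖ₑ ^ p ∂μ ≤
      (∫⁻ x, ‖f x‖ₑ ^ p₀ ∂μ) ^ a * (∫⁻ x, ‖f x‖ₑ ^ p₁ ∂μ) ^ b := by
    simp_rw [hsplit]
    exact ENNReal.lintegral_mul_norm_pow_le (hf.enorm.pow_const _) (hf.enorm.pow_const _)
      (by positivity) (by positivity) hab
  calc eLpNorm' f p μ ≤ ((∫⁻ x, ‖f x‖ₑ ^ p₀ ∂μ) ^ a * (∫⁻ x, ‖f x‖ₑ ^ p₁ ∂μ) ^ b) ^ (1 / p) :=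
        ENNReal.rpow_le_rpow hholder (by positivity)
    _ = eLpNorm' f p₀ μ ^ (1 - θ) * eLpNorm' f p₁ μ ^ θ := by
        rw [ENNReal.mul_rpow_of_nonneg _ _ (by positivity), eLpNorm', eLpNorm',
          ← ENNReal.rpow_mul, ← ENNReal.rpow_mul, ← ENNReal.rpow_mul, ← ENNReal.rpow_mul]
        congr 2 <;> simp only [a, b] <;> field_simp

theorem lpNorm_le_lpNorm_rpow_mul_lpNorm_rpow {p p₀ p₁ : ℝ≥0} {θ : ℝ}
    (hf₀ : MemLp f p₀ μ) (hf₁ : MemLp f p₁ μ) (hp₀ : p₀ ≠ 0) (hp₁ : p₁ ≠ 0)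
    (hθ₀ : 0 ≤ θ) (hθ₁ : θ ≤ 1) (hp : (p : ℝ)⁻¹ = (1 - θ) / p₀ + θ / p₁) :
    lpNorm f p μ ≤ lpNorm f p₀ μ ^ (1 - θ) * lpNorm f p₁ μ ^ θ := by
  rcases eq_or_ne p 0 with rfl | hp0
  · rw [ENNReal.coe_zero, lpNorm_exponent_zero]
    exact mul_nonneg (Real.rpow_nonneg lpNorm_nonneg _) (Real.rpow_nonneg lpNorm_nonneg _)
  have hf := hf₀.aestronglyMeasurable
  have h₀ := hf₀.eLpNorm_ne_top
  have h₁ := hf₁.eLpNorm_ne_top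
  simp only [← toReal_eLpNorm hf, ENNReal.coe_toReal,
    eLpNorm_eq_eLpNorm' (ENNReal.coe_ne_zero.2 hp0) ENNReal.coe_ne_top,
    eLpNorm_eq_eLpNorm' (ENNReal.coe_ne_zero.2 hp₀) ENNReal.coe_ne_top,
    eLpNorm_eq_eLpNorm' (ENNReal.coe_ne_zero.2 hp₁) ENNReal.coe_ne_top] at h₀ h₁ ⊢
  have hfinite : eLpNorm' f p₀ μ ^ (1 - θ) * eLpNorm' f p₁ μ ^ θ ≠ ⊤ :=
    ENNReal.mul_ne_top (ENNReal.rpow_ne_top_of_nonneg (by linarith) h₀)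
      (ENNReal.rpow_ne_top_of_nonneg hθ₀ h₁)
  calc (eLpNorm' f p μ).toReal
      ≤ (eLpNorm' f p₀ μ ^ (1 - θ) * eLpNorm' f p₁ μ ^ θ).toReal :=
        ENNReal.toReal_mono hfinite
          (eLpNorm'_le_eLpNorm'_rpow_mul_eLpNorm'_rpow hf (by positivity) (by positivity)
            hθ₀ hθ₁ hp)
    _ = _ := by rw [ENNReal.toReal_mul, ← ENNReal.toReal_rpow, ← ENNReal.toReal_rpow]

theorem MemLp.lpNorm_sub_condExp_le {m : MeasurableSpace α} {p : ℝ≥0∞}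
    [NormedSpace ℝ E] [CompleteSpace E] (hp : 1 ≤ p) (hf : MemLp f p μ) :
    lpNorm (f - μ[f | m]) p μ ≤ 2 * lpNorm f p μ := by
  calc lpNorm (f - μ[f | m]) p μ ≤ lpNorm f p μ + lpNorm (μ[f | m]) p μ := lpNorm_sub_le hf hp
    _ ≤ 2 * lpNorm f p μ := by linarith [hf.lpNorm_condExp_le_lpNorm (m := m) hp]

end MeasureTheory

theorem ned_lp_approximation_summable_general
    {Ω : Type*} [mΩ : MeasurableSpace Ω] (P : Measure Ω) [IsProbabilityMeasure P]
    (X1 : Ω → ℝ) (hX1int : Integrable X1 P)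
    (δ : ℝ) (hδ : 0 < δ)
    (hmom : Integrable (fun ω => |X1 ω| ^ (2 + δ)) P)
    (F : ℕ → MeasurableSpace Ω)
    (a : ℕ → ℝ)
    (hNED : ∀ l : ℕ, (∫ ω, |X1 ω - (P[X1|F l]) ω| ∂P) ≤ a l)
    (hsum : Summable (fun l => a l ^ (δ / (1 + δ)))) :
    Summable (fun l : ℕ =>
      (∫ ω, |X1 ω - (P[X1|F l]) ω| ^ ((2 + δ) / (1 + δ)) ∂P) ^ ((1 + δ) / (2 + δ))) := by
  obtain ⟨p, hp⟩ : ∃ p : ℝ≥0, (p : ℝ) = (2 + δ) / (1 + δ) := ⟨⟨_, by positivity⟩, rfl⟩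
  obtain ⟨q, hq⟩ : ∃ q : ℝ≥0, (q : ℝ) = 2 + δ := ⟨⟨_, by positivity⟩, rfl⟩
  have hq1 : 1 ≤ (q : ℝ≥0∞) := by
    rw [← ENNReal.coe_one, ENNReal.coe_le_coe, ← NNReal.coe_le_coe, hq, NNReal.coe_one]
    linarith
  have hp0 : p ≠ 0 := by rw [← NNReal.coe_ne_zero, hp]; positivity
  have hq0 : q ≠ 0 := by rw [← NNReal.coe_ne_zero, hq]; positivity
  have hXq : MemLp X1 q P :=
    (integrable_norm_rpow_iff hX1int.1 (by simpa using hq0) ENNReal.coe_ne_top).1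
      (by simpa [hq] using hmom)
  have hpq : (p : ℝ)⁻¹ = (1 - 1 / (1 + δ)) / (1 : ℝ≥0) + 1 / (1 + δ) / q := by
    rw [hp, hq, NNReal.coe_one]
    field_simp
    ring
  refine (hsum.mul_right ((2 * lpNorm X1 q P) ^ (1 / (1 + δ)))).of_nonneg_of_le
    (fun l => by positivity) (fun l => ?_)
  set Y := X1 - P[X1|F l]
  have hYq : MemLp Y q P := hXq.sub (hXq.condExp hq1)
  have hY1 : lpNorm Y 1 P ≤ a l := by
    simpa only [lpNorm_one_eq_integral_norm hYq.1, Y, Pi.sub_apply, Real.norm_eq_abs]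
      using hNED l
  calc (∫ ω, |X1 ω - (P[X1|F l]) ω| ^ ((2 + δ) / (1 + δ)) ∂P) ^ ((1 + δ) / (2 + δ))
      = lpNorm Y p P := by
        rw [lpNorm_nnreal_eq_integral_norm_rpow hp0 hYq.1, hp, inv_div]
        simp only [Y, Pi.sub_apply, Real.norm_eq_abs]
    _ ≤ lpNorm Y 1 P ^ (1 - 1 / (1 + δ)) * lpNorm Y q P ^ (1 / (1 + δ)) := by
        simpa only [ENNReal.coe_one] using lpNorm_le_lpNorm_rpow_mul_lpNorm_rpow
          (hYq.mono_exponent (by simpa using hq1)) hYq one_ne_zero hq0 (by positivity)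
          (div_le_one_of_le₀ (by linarith) (by positivity)) hpq
    _ ≤ a l ^ (δ / (1 + δ)) * (2 * lpNorm X1 q P) ^ (1 / (1 + δ)) := by
        rw [show 1 - 1 / (1 + δ) = δ / (1 + δ) by field_simp; ring]
        exact mul_le_mul (Real.rpow_le_rpow lpNorm_nonneg hY1 (by positivity))
          (Real.rpow_le_rpow lpNorm_nonneg (hXq.lpNorm_sub_condExp_le hq1) (by positivity))
          (Real.rpow_nonneg lpNorm_nonneg _) (Real.rpow_nonneg (lpNorm_nonneg.trans hY1) _)

/-- If `(X_n)` is `L¹` near epoch dependent on `(Z_n)` with approximation constants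
`(a_l)` satisfying `∑ a_l^{δ/(1+δ)} < ∞` and `E|X_1|^{2+δ} < ∞`, then
`∑_l (E|X_1 - E[X_1|Z_{-l},…,Z_l]|^{(2+δ)/(1+δ)})^{(1+δ)/(2+δ)} < ∞`. -/
theorem ned_lp_approximation_summable
    {Ω : Type*} [mΩ : MeasurableSpace Ω] (P : Measure Ω) [IsProbabilityMeasure P]
    (Z : ℤ → Ω → ℝ) (X1 : Ω → ℝ) (hX1 : Measurable X1) (hX1int : Integrable X1 P)
    (δ : ℝ) (hδ : 0 < δ)
    (hmom : Integrable (fun ω => |X1 ω| ^ (2 + δ)) P)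
    (F : ℕ → MeasurableSpace Ω)
    (hF : ∀ l : ℕ, F l = ⨆ i ∈ Set.Icc (-(l:ℤ)) (l:ℤ), MeasurableSpace.comap (Z i) inferInstance)
    (hFle : ∀ l, F l ≤ mΩ)
    (a : ℕ → ℝ) (ha : ∀ l, 0 ≤ a l)
    (hNED : ∀ l : ℕ, (∫ ω, |X1 ω - (P[X1|F l]) ω| ∂P) ≤ a l)
    (hsum : Summable (fun l => a l ^ (δ / (1 + δ)))) :
    Summable (fun l : ℕ =>
      (∫ ω, |X1 ω - (P[X1|F l]) ω| ^ ((2 + δ) / (1 + δ)) ∂P) ^ ((1 + δ) / (2 + δ))) :=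
  ned_lp_approximation_summable_general (mΩ := mΩ) P X1 hX1int δ hδ hmom F a hNED hsum
end

section
/- Let (\xi_n) be a sequence of centered random variables such that sup_k E(\sum_{i=k+1}^{k+n} \xi_i)^2 \le Cn for all n \ge 1. Then (1/(\sqrt{n} \log^2 n)) \sum_{i=1}^n \xi_i -> 0 almost surely. -/
/-!
Dyadic chaining. For `n < 2 ^ (m + 1)`, telescoping `S n` along the binary truncations
`2 ^ j * (n / 2 ^ j)`, `j ≤ m`, writes `S n` as a sum of `m + 1` increments of `S` over dyadic
blocks, so by Cauchy–Schwarz `(S n) ^ 2 ≤ (m + 1) * G m`, where `G m` is the sum of the squared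
increments over all dyadic blocks of level `≤ m` inside `[0, 2 ^ (m + 1))`. The second moment
bound gives `E (G m) ≤ (m + 1) * 2 ^ m * C`, so the integrals of `G m / (2 ^ m * (m + 1) ^ 3)`
are summable and this ratio tends to `0` almost surely. Finally, for `m = ⌊log₂ n⌋` we have
`n * log n ^ 4 ≥ 2 ^ m * ((m + 1) * log 2 / 2) ^ 4`, hence
`(S n) ^ 2 / (n * log n ^ 4) ≤ 16 / log 2 ^ 4 * G m / (2 ^ m * (m + 1) ^ 3)`.
-/

open MeasureTheory Filter Finset Topology
open scoped ENNReal

def dyadicSquareSum (s : ℕ → ℝ) (m : ℕ) : ℝ :=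
  ∑ j ∈ range (m + 1), ∑ q ∈ range (2 ^ (m - j)),
    (s (2 ^ (j + 1) * q + 2 ^ j) - s (2 ^ (j + 1) * q)) ^ 2

theorem dyadicSquareSum_nonneg (s : ℕ → ℝ) (m : ℕ) : 0 ≤ dyadicSquareSum s m := by
  unfold dyadicSquareSum; positivity

theorem sum_range_sub_pow_mul_div_pow (s : ℕ → ℝ) {m n : ℕ} (hn : n < 2 ^ (m + 1)) :
    ∑ j ∈ range (m + 1), (s (2 ^ j * (n / 2 ^ j)) - s (2 ^ (j + 1) * (n / 2 ^ (j + 1)))) =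
      s n - s 0 := by
  rw [sum_range_sub' (fun j => s (2 ^ j * (n / 2 ^ j))), Nat.div_eq_of_lt hn]
  simp

-- The two truncations coincide unless bit `j` of `n` is set, in which case they bound a block
-- of length `2 ^ j` starting at a multiple of `2 ^ (j + 1)`.
theorem sq_sub_pow_mul_div_pow_le (s : ℕ → ℝ) {j m n : ℕ} (hj : j ≤ m) (hn : n < 2 ^ (m + 1)) :
    (s (2 ^ j * (n / 2 ^ j)) - s (2 ^ (j + 1) * (n / 2 ^ (j + 1)))) ^ 2 ≤
      ∑ q ∈ range (2 ^ (m - j)), (s (2 ^ (j + 1) * q + 2 ^ j) - s (2 ^ (j + 1) * q)) ^ 2 := by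
  have hq : n / 2 ^ (j + 1) < 2 ^ (m - j) := by
    apply Nat.div_lt_of_lt_mul
    rwa [← pow_add, show j + 1 + (m - j) = m + 1 by omega]
  have hbit :
      2 ^ j * (n / 2 ^ j) = 2 ^ (j + 1) * (n / 2 ^ (j + 1)) + 2 ^ j * (n / 2 ^ j % 2) := by
    rw [pow_succ, ← Nat.div_div_eq_div_mul, mul_assoc, ← mul_add, Nat.div_add_mod]
  rw [hbit]
  rcases Nat.mod_two_eq_zero_or_one (n / 2 ^ j) with h | h
  · rw [h, mul_zero, add_zero, sub_self, sq, mul_zero]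
    positivity
  · rw [h, mul_one]
    exact single_le_sum (f := fun q => (s (2 ^ (j + 1) * q + 2 ^ j) - s (2 ^ (j + 1) * q)) ^ 2)
      (fun _ _ => sq_nonneg _) (mem_range.2 hq)

theorem sq_sub_le_succ_mul_dyadicSquareSum (s : ℕ → ℝ) {m n : ℕ} (hn : n < 2 ^ (m + 1)) :
    (s n - s 0) ^ 2 ≤ (m + 1) * dyadicSquareSum s m := by
  rw [← sum_range_sub_pow_mul_div_pow s hn]
  refine sq_sum_le_card_mul_sum_sq.trans ?_
  rw [card_range, Nat.cast_succ]
  exact mul_le_mul_of_nonneg_left (sum_le_sum fun j hj =>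
    sq_sub_pow_mul_div_pow_le s (Nat.lt_succ_iff.1 (mem_range.1 hj)) hn) (by positivity)

theorem pow_log_mul_succ_log_pow_le {n : ℕ} (hn : 2 ≤ n) :
    2 ^ Nat.log 2 n * ((Nat.log 2 n + 1) * Real.log 2 / 2) ^ 4 ≤ n * Real.log n ^ 4 := by
  set m := Nat.log 2 n
  have hm : 1 ≤ m := Nat.le_log_of_pow_le one_lt_two (by simpa using hn)
  have hpow : (2 : ℝ) ^ m ≤ n := by exact_mod_cast Nat.pow_log_le_self 2 (by omega)
  have hlog : m * Real.log 2 ≤ Real.log n := by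
    rw [← Real.log_pow]; exact Real.log_le_log (by positivity) hpow
  have hm' : ((m : ℝ) + 1) / 2 ≤ m := by
    have : (1 : ℝ) ≤ m := by exact_mod_cast hm
    linarith
  gcongr
  calc ((m : ℝ) + 1) * Real.log 2 / 2 = (m + 1) / 2 * Real.log 2 := by ring
    _ ≤ m * Real.log 2 := by gcongr
    _ ≤ Real.log n := hlog

theorem tendsto_nat_log_atTop {b : ℕ} (hb : 1 < b) : Tendsto (Nat.log b) atTop atTop :=
  tendsto_atTop_atTop.2 fun k => ⟨b ^ k, fun _ hn => Nat.le_log_of_pow_le hb hn⟩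

theorem sq_div_sqrt_mul_log_sq_le (s : ℕ → ℝ) {n : ℕ} (hn : 2 ≤ n) :
    (1 / (√n * Real.log n ^ 2) * (s n - s 0)) ^ 2 ≤
      16 / Real.log 2 ^ 4 *
        (dyadicSquareSum s (Nat.log 2 n) / (2 ^ Nat.log 2 n * (Nat.log 2 n + 1) ^ 3)) := by
  set m := Nat.log 2 n
  calc (1 / (√n * Real.log n ^ 2) * (s n - s 0)) ^ 2
      = (s n - s 0) ^ 2 / (n * Real.log n ^ 4) := by
        rw [div_mul_eq_mul_div, one_mul, div_pow, mul_pow, Real.sq_sqrt (Nat.cast_nonneg n),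
          ← pow_mul]
    _ ≤ (m + 1) * dyadicSquareSum s m / (2 ^ m * ((m + 1) * Real.log 2 / 2) ^ 4) :=
        div_le_div₀ (mul_nonneg (by positivity) (dyadicSquareSum_nonneg s m))
          (sq_sub_le_succ_mul_dyadicSquareSum s (Nat.lt_pow_succ_log_self one_lt_two n))
          (by positivity) (pow_log_mul_succ_log_pow_le hn)
    _ = _ := by field_simp; ring

theorem tendsto_sub_div_sqrt_mul_log_sq (s : ℕ → ℝ)
    (h : Tendsto (fun m : ℕ => dyadicSquareSum s m / (2 ^ m * (m + 1) ^ 3)) atTop (𝓝 0)) :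
    Tendsto (fun n : ℕ => 1 / (√n * Real.log n ^ 2) * (s n - s 0)) atTop (𝓝 0) := by
  have hsq :
      Tendsto (fun n : ℕ => (1 / (√n * Real.log n ^ 2) * (s n - s 0)) ^ 2) atTop (𝓝 0) := by
    have := (h.comp (tendsto_nat_log_atTop one_lt_two)).const_mul (16 / Real.log 2 ^ 4)
    rw [mul_zero] at this
    exact squeeze_zero' (Eventually.of_forall fun n => sq_nonneg _)
      ((eventually_ge_atTop 2).mono fun n hn => sq_div_sqrt_mul_log_sq_le s hn) this
  rw [tendsto_zero_iff_abs_tendsto_zero]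
  simpa only [Real.sqrt_sq_eq_abs, Real.sqrt_zero, Function.comp_def] using hsq.sqrt

section AeTendsto
variable {Ω : Type*} [MeasurableSpace Ω] {μ : Measure Ω}

theorem ae_tendsto_zero_of_tsum_lintegral_ne_top {f : ℕ → Ω → ℝ≥0∞}
    (hf : ∀ m, AEMeasurable (f m) μ) (h : ∑' m, ∫⁻ ω, f m ω ∂μ ≠ ∞) :
    ∀ᵐ ω ∂μ, Tendsto (fun m => f m ω) atTop (𝓝 0) := by
  rw [← lintegral_tsum hf] at h
  filter_upwards [ae_lt_top' (AEMeasurable.tsum hf) h] with ω hω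
  exact ENNReal.tendsto_atTop_zero_of_tsum_ne_top hω.ne

theorem ae_tendsto_zero_of_summable_integral {f : ℕ → Ω → ℝ} (hf0 : ∀ m, 0 ≤ᵐ[μ] f m)
    (hf : ∀ m, Integrable (f m) μ) (h : Summable fun m => ∫ ω, f m ω ∂μ) :
    ∀ᵐ ω ∂μ, Tendsto (fun m => f m ω) atTop (𝓝 0) := by
  have hne : ∑' m, ∫⁻ ω, ENNReal.ofReal (f m ω) ∂μ ≠ ∞ := by
    simp_rw [← ofReal_integral_eq_lintegral_ofReal (hf _) (hf0 _),
      ← ENNReal.ofReal_tsum_of_nonneg (fun m => integral_nonneg_of_ae (hf0 m)) h]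
    exact ENNReal.ofReal_ne_top
  filter_upwards [ae_tendsto_zero_of_tsum_lintegral_ne_top
    (fun m => (hf m).aemeasurable.ennreal_ofReal) hne, ae_all_iff.2 hf0] with ω hω hω0
  have := (ENNReal.tendsto_toReal ENNReal.zero_ne_top).comp hω
  simpa [Function.comp_def, ENNReal.toReal_ofReal (hω0 _)] using this

end AeTendsto

section SecondMoment
variable {Ω : Type*} [MeasurableSpace Ω] {P : Measure Ω} {X : ℕ → Ω → ℝ}

theorem integrable_sq_sub (hX : ∀ n, MemLp (X n) 2 P) (a b : ℕ) :
    Integrable (fun ω => (X a ω - X b ω) ^ 2) P :=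
  ((hX a).sub (hX b)).integrable_sq

theorem integrable_dyadicSquareSum (hX : ∀ n, MemLp (X n) 2 P) (m : ℕ) :
    Integrable (fun ω => dyadicSquareSum (X · ω) m) P :=
  integrable_finsetSum _ fun _ _ => integrable_finsetSum _ fun _ _ => integrable_sq_sub hX _ _

theorem integral_dyadicSquareSum_le (hX : ∀ n, MemLp (X n) 2 P) {C : ℝ}
    (hinc : ∀ a l : ℕ, 1 ≤ l → ∫ ω, (X (a + l) ω - X a ω) ^ 2 ∂P ≤ C * l) (m : ℕ) :
    ∫ ω, dyadicSquareSum (X · ω) m ∂P ≤ (m + 1) * (2 ^ m * C) := by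
  simp only [dyadicSquareSum]
  rw [integral_finsetSum _ fun _ _ =>
    integrable_finsetSum _ fun _ _ => integrable_sq_sub hX _ _]
  calc ∑ j ∈ range (m + 1), ∫ ω, ∑ q ∈ range (2 ^ (m - j)),
        (X (2 ^ (j + 1) * q + 2 ^ j) ω - X (2 ^ (j + 1) * q) ω) ^ 2 ∂P
      ≤ ∑ j ∈ range (m + 1), ∑ q ∈ range (2 ^ (m - j)), C * 2 ^ j := by
        gcongr with j
        rw [integral_finsetSum _ fun _ _ => integrable_sq_sub hX _ _]
        gcongr with q
        exact_mod_cast hinc _ (2 ^ j) Nat.one_le_two_pow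
    _ = ∑ j ∈ range (m + 1), 2 ^ m * C := sum_congr rfl fun j hj => by
        rw [sum_const, card_range, nsmul_eq_mul, Nat.cast_pow, Nat.cast_two, mul_left_comm,
          ← pow_add, Nat.sub_add_cancel (Nat.lt_succ_iff.1 (mem_range.1 hj)), mul_comm]
    _ = (m + 1) * (2 ^ m * C) := by rw [sum_const, card_range, nsmul_eq_mul, Nat.cast_succ]

theorem ae_tendsto_dyadicSquareSum_div (hX : ∀ n, MemLp (X n) 2 P) {C : ℝ}
    (hinc : ∀ a l : ℕ, 1 ≤ l → ∫ ω, (X (a + l) ω - X a ω) ^ 2 ∂P ≤ C * l) :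
    ∀ᵐ ω ∂P, Tendsto (fun m : ℕ => dyadicSquareSum (X · ω) m / (2 ^ m * (m + 1) ^ 3))
      atTop (𝓝 0) := by
  have hsum : Summable fun m : ℕ => C / ((m : ℝ) + 1) ^ 2 := by
    simpa [div_eq_mul_inv] using ((summable_nat_add_iff 1).2
      (Real.summable_one_div_nat_pow.2 one_lt_two)).mul_left C
  have hnonneg (m : ℕ) (ω : Ω) : 0 ≤ dyadicSquareSum (X · ω) m / (2 ^ m * (m + 1) ^ 3) :=
    div_nonneg (dyadicSquareSum_nonneg _ m) (by positivity)
  refine ae_tendsto_zero_of_summable_integral (fun m => Eventually.of_forall (hnonneg m))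
    (fun m => (integrable_dyadicSquareSum hX m).div_const _)
    (hsum.of_nonneg_of_le (fun m => integral_nonneg (hnonneg m)) fun m => ?_)
  rw [integral_div]
  calc (∫ ω, dyadicSquareSum (X · ω) m ∂P) / (2 ^ m * (m + 1) ^ 3)
      ≤ (m + 1) * (2 ^ m * C) / (2 ^ m * (m + 1) ^ 3) := by
        gcongr
        exact integral_dyadicSquareSum_le hX hinc m
    _ = C / (m + 1) ^ 2 := by field_simp

end SecondMoment

theorem sln_under_second_moment_bound_general
    {Ω : Type*} [MeasurableSpace Ω] (P : Measure Ω)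
    (ξ : ℕ → Ω → ℝ)
    (hL2 : ∀ i, MemLp (ξ i) 2 P)
    (C : ℝ)
    (hbound : ∀ k n : ℕ, 1 ≤ n →
      ∫ ω, (∑ i ∈ Finset.Icc (k + 1) (k + n), ξ i ω)^2 ∂P ≤ C * n) :
    ∀ᵐ ω ∂P, Tendsto
      (fun n : ℕ => (1 / (Real.sqrt n * (Real.log n)^2)) * ∑ i ∈ Finset.Icc 1 n, ξ i ω)
      atTop (nhds 0) := by
  set S : ℕ → Ω → ℝ := fun n ω => ∑ i ∈ Icc 1 n, ξ i ω
  have hincrement (a l : ℕ) (ω : Ω) :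
      S (a + l) ω - S a ω = ∑ i ∈ Icc (a + 1) (a + l), ξ i ω := by
    have h := sum_Ioc_consecutive (fun i => ξ i ω) (Nat.zero_le a) (Nat.le_add_right a l)
    simp only [← Icc_add_one_left_eq_Ioc, zero_add] at h
    simp only [S, ← h, add_sub_cancel_left]
  have hS : ∀ n, MemLp (S n) 2 P := fun n => memLp_finsetSum _ fun i _ => hL2 i
  filter_upwards [ae_tendsto_dyadicSquareSum_div hS fun a l hl => by
    simpa only [hincrement] using hbound a l hl] with ω hω
  simpa [S] using tendsto_sub_div_sqrt_mul_log_sq (S · ω) hω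

/-- If `(ξ_n)` are centered with `sup_k E(∑_{i=k+1}^{k+n} ξ_i)² ≤ C n` for all `n ≥ 1`,
then `(1/(√n log² n)) ∑_{i=1}^n ξ_i → 0` almost surely. -/
theorem sln_under_second_moment_bound
    {Ω : Type*} [MeasurableSpace Ω] (P : Measure Ω) [IsProbabilityMeasure P]
    (ξ : ℕ → Ω → ℝ) (hmeas : ∀ i, Measurable (ξ i))
    (hL2 : ∀ i, MemLp (ξ i) 2 P)
    (hcent : ∀ i, ∫ ω, ξ i ω ∂P = 0)
    (C : ℝ) (hC : 0 < C)
    (hbound : ∀ k n : ℕ, 1 ≤ n →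
      ∫ ω, (∑ i ∈ Finset.Icc (k + 1) (k + n), ξ i ω)^2 ∂P ≤ C * n) :
    ∀ᵐ ω ∂P, Tendsto
      (fun n : ℕ => (1 / (Real.sqrt n * (Real.log n)^2)) * ∑ i ∈ Finset.Icc 1 n, ξ i ω)
      atTop (nhds 0) :=
  sln_under_second_moment_bound_general P ξ hL2 C hbound
end
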